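/- Let k be a field of characteristic ≠ 2 with i² = −1, R, λ, E, ε as before. At the point p of Spec R given by (x₀, x₁, x₂) = (1, 0, 0), the specialization of E is [[0,0],[0,1]] and ε induces the identity on ker(E) ⊗_R κ(p); at q = (−1, 0, 0), the specialization of E is [[1,0],[0,0]] and ε induces multiplication by −1 on ker(E) ⊗_R κ(q). -/

import Mathlib

open MvPolynomial

/-- The defining ideal of the affine quadric `Σᵢ xᵢ² = 1` in `n+1` variables. -/
noncomputable def quadIdeal (k : Type*) [CommRing k] (n : ℕ) : Ideal (MvPolynomial (Fin (n + 1)) k) :=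
  Ideal.span {(1 : MvPolynomial (Fin (n + 1)) k) - ∑ i, X i ^ 2}

/-- The coordinate ring `k[x₀, …, xₙ]/(1 − Σᵢ xᵢ²)`. -/
abbrev QuadRing (k : Type*) [CommRing k] (n : ℕ) : Type _ :=
  MvPolynomial (Fin (n + 1)) k ⧸ quadIdeal k n

/-- The image of the variable `xᵢ` in the quadric coordinate ring. -/
noncomputable def xbar (k : Type*) [CommRing k] (n : ℕ) (i : Fin (n + 1)) : QuadRing k n :=
  Ideal.Quotient.mk (quadIdeal k n) (X i)



set_option maxHeartbeats 1000000
set_option synthInstance.maxHeartbeats 400000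

lemma quad_hom_ext {k : Type*} [CommRing k] {n : ℕ} {S : Type*} [CommRing S] [Algebra k S]
    (f g : QuadRing k n →ₐ[k] S)
    (h : ∀ i, f (xbar k n i) = g (xbar k n i)) : f = g := by
  apply Ideal.Quotient.algHom_ext
  apply MvPolynomial.algHom_ext
  exact h

/-- At the fixed point `p = (1,0,0)` of `Spec R`, the idempotent `E` specializes to
`[[0,0],[0,1]]` and `ε` induces the identity on the fibre of `ker E`; at
`q = (−1,0,0)`, `E` specializes to `[[1,0],[0,0]]` and `ε` induces multiplication
by `−1` on the fibre of `ker E`. -/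
theorem stmt11 {k : Type*} [Field k] (hchar : ringChar k ≠ 2)
    (i : k) (hi : i ^ 2 = -1)
    (l : QuadRing k 2 →ₐ[k] QuadRing k 2) (hl2 : ∀ r, l (l r) = r)
    (hl0 : l (xbar k 2 0) = xbar k 2 0)
    (hl1 : l (xbar k 2 1) = - xbar k 2 1)
    (hl2' : l (xbar k 2 2) = - xbar k 2 2)
    (ep eq : QuadRing k 2 →ₐ[k] k)
    (hp0 : ep (xbar k 2 0) = 1) (hp1 : ep (xbar k 2 1) = 0) (hp2 : ep (xbar k 2 2) = 0)
    (hq0 : eq (xbar k 2 0) = -1) (hq1 : eq (xbar k 2 1) = 0) (hq2 : eq (xbar k 2 2) = 0) :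
    let R := QuadRing k 2
    let x : Fin 3 → R := xbar k 2
    let i' : R := algebraMap k R i
    let E : Matrix (Fin 2) (Fin 2) R :=
      algebraMap k R 2⁻¹ •
        Matrix.of !![1 - x 0, x 1 + i' * x 2; x 1 - i' * x 2, 1 + x 0]
    let ε : (Fin 2 → R) → (Fin 2 → R) := fun v => ![l (v 0), - l (v 1)]
    E.map ep = !![0, 0; 0, 1] ∧
    (∀ v, E.mulVec v = 0 → (fun j => ep (ε v j)) = fun j => ep (v j)) ∧
    E.map eq = !![1, 0; 0, 0] ∧
    (∀ v, E.mulVec v = 0 → (fun j => eq (ε v j)) = fun j => - eq (v j)) := by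
  intro R x i' E ε
  have h2 : (2:k) ≠ 0 := Ring.two_ne_zero hchar
  have h11 : (1:k) + 1 ≠ 0 := by rw [one_add_one_eq_two]; exact h2
  have hep : ∀ r, ep (l r) = ep r := by
    intro r
    have : ep.comp l = ep := by
      apply quad_hom_ext
      intro j
      fin_cases j <;>
        simp [hl0, hl1, hl2', hp0, hp1, hp2]
    exact congrFun (congrArg (fun f => f.toFun) this) r
  have heq : ∀ r, eq (l r) = eq r := by
    intro r
    have : eq.comp l = eq := by
      apply quad_hom_ext
      intro j
      fin_cases j <;>
        simp [hl0, hl1, hl2', hq0, hq1, hq2]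
    exact congrFun (congrArg (fun f => f.toFun) this) r
  have hEent : ∀ (f : QuadRing k 2 →ₐ[k] k) a b,
      f (E a b) = 2⁻¹ * f (Matrix.of !![1 - x 0, x 1 + i' * x 2; x 1 - i' * x 2, 1 + x 0] a b) := by
    intro f a b
    simp [E, Matrix.smul_apply, smul_eq_mul]
  have hof : ∀ a b, Matrix.of !![1 - x 0, x 1 + i' * x 2; x 1 - i' * x 2, 1 + x 0] a b
      = !![1 - x 0, x 1 + i' * x 2; x 1 - i' * x 2, 1 + x 0] a b := fun a b => rfl
  refine ⟨?_, ?_, ?_, ?_⟩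
  · ext a b
    fin_cases a <;> fin_cases b <;>
      simp [Matrix.map_apply, hEent, hof, x, i', hp0, hp1, hp2] <;>
      rw [one_add_one_eq_two, inv_mul_cancel₀ h2]
  · intro v hv
    have h1 : ep (v 1) = 0 := by
      have := congrFun hv 1
      simp only [Matrix.mulVec, dotProduct, Fin.sum_univ_two, Pi.zero_apply] at this
      have := congrArg ep this
      rw [map_add, map_mul, map_mul, hEent, hEent] at this
      simp [hof, x, i', hp0, hp1, hp2] at this
      rcases this with (h | h) | h
      · exact absurd h h2
      · exact absurd h h11
      · exact h
    funext j
    fin_cases j <;> simp [ε, hep, h1]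
  · ext a b
    fin_cases a <;> fin_cases b <;>
      simp [Matrix.map_apply, hEent, hof, x, i', hq0, hq1, hq2] <;>
      rw [one_add_one_eq_two, inv_mul_cancel₀ h2]
  · intro v hv
    have h0 : eq (v 0) = 0 := by
      have := congrFun hv 0
      simp only [Matrix.mulVec, dotProduct, Fin.sum_univ_two, Pi.zero_apply] at this
      have := congrArg eq this
      rw [map_add, map_mul, map_mul, hEent, hEent] at this
      simp [hof, x, i', hq0, hq1, hq2] at this
      rcases this with (h | h) | h
      · exact absurd h h2
      · exact absurd h h11
      · exact h
    funext j
    fin_cases j <;> simp [ε, heq, h0]
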